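/- Let X be a metric space and x* ∈ X a pole of X, meaning that for every x ∈ X with x ≠ x* there is a geodesic ray starting at x* and passing through x. Then (0, x*) is a pole of the product metric space ℝᵏ × X (with the product metric d((a,x),(b,y)) = √(|a−b|² + d(x,y)²)). -/
import Mathlib


/-- The ℓ²-product distance on `ℝᵏ × X`. -/
noncomputable def d2 {k : ℕ} {X : Type*} [MetricSpace X]
    (p q : EuclideanSpace ℝ (Fin k) × X) : ℝ :=
  Real.sqrt (dist p.1 q.1 ^ 2 + dist p.2 q.2 ^ 2)

/-- There is a geodesic ray from `p` passing through `q`, with respect to the distance `d`. -/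
def IsRayFromThrough {Y : Type*} (d : Y → Y → ℝ) (p q : Y) : Prop :=
  ∃ γ : ℝ → Y, γ 0 = p ∧ (∀ s t : ℝ, 0 ≤ s → 0 ≤ t → d (γ s) (γ t) = |s - t|) ∧
    ∃ t : ℝ, 0 ≤ t ∧ γ t = q

/-- `p` is a pole: every other point lies on a geodesic ray from `p`. -/
def IsPole {Y : Type*} (d : Y → Y → ℝ) (p : Y) : Prop :=
  ∀ q : Y, q ≠ p → IsRayFromThrough d p q

/-- If `x*` is a pole of the metric space `X`, then `(0, x*)` is a pole of the
product `ℝᵏ × X` with the ℓ²-product metric. -/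
theorem stmt7 (k : ℕ) (X : Type*) [MetricSpace X] (xs : X)
    (h : IsPole dist xs) :
    IsPole (d2 (k := k) (X := X)) (0, xs) := by
  rintro ⟨a, y⟩ hq
  by_cases hy : y = xs
  · subst hy
    have ha : a ≠ 0 := fun h0 => hq (by simp [h0])
    have hr : (0:ℝ) < ‖a‖ := norm_pos_iff.mpr ha
    refine ⟨fun s => ((s / ‖a‖) • a, y), by simp, ?_, ‖a‖, hr.le, by
      show ((‖a‖ / ‖a‖) • a, y) = (a, y)
      rw [div_self hr.ne', one_smul]⟩
    intro s t _ _
    simp only [d2, dist_self]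
    have hd : dist ((s / ‖a‖) • a) ((t / ‖a‖) • a) = |s - t| := by
      rw [dist_eq_norm, ← sub_smul, norm_smul, Real.norm_eq_abs, div_sub_div_same,
        abs_div, abs_of_pos hr, div_mul_cancel₀ _ hr.ne']
    rw [hd]
    simpa using Real.sqrt_sq (abs_nonneg (s - t))
  · obtain ⟨γ, hγ0, hiso, t0, ht0, hγt0⟩ := h y hy
    have ht0' : 0 < t0 := by
      rcases lt_or_eq_of_le ht0 with h' | h'
      · exact h'
      · exact absurd (show y = xs by rw [← hγt0, ← h', hγ0]) hy
    set r : ℝ := Real.sqrt (‖a‖ ^ 2 + t0 ^ 2) with hr_def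
    have hsum : (0:ℝ) < ‖a‖ ^ 2 + t0 ^ 2 := by positivity
    have hr : 0 < r := Real.sqrt_pos.mpr hsum
    have hr2 : r ^ 2 = ‖a‖ ^ 2 + t0 ^ 2 := Real.sq_sqrt hsum.le
    refine ⟨fun s => ((s / r) • a, γ (s * t0 / r)), by simp [hγ0], ?_, r, hr.le, by
      show ((r / r) • a, γ (r * t0 / r)) = (a, y)
      rw [div_self hr.ne', one_smul, mul_div_cancel_left₀ _ hr.ne', hγt0]⟩
    intro s t hs ht
    simp only [d2]
    have hd1 : dist ((s / r) • a) ((t / r) • a) = |s - t| / r * ‖a‖ := by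
      rw [dist_eq_norm, ← sub_smul, norm_smul, Real.norm_eq_abs, div_sub_div_same,
        abs_div, abs_of_pos hr]
    have hd2 : dist (γ (s * t0 / r)) (γ (t * t0 / r)) = |s - t| / r * t0 := by
      rw [hiso _ _ (by positivity) (by positivity)]
      rw [div_sub_div_same, ← sub_mul, abs_div, abs_mul, abs_of_pos hr,
        abs_of_pos ht0']
      ring
    rw [hd1, hd2]
    have : (|s - t| / r * ‖a‖) ^ 2 + (|s - t| / r * t0) ^ 2 = |s - t| ^ 2 := by
      have : (|s - t| / r) ^ 2 * (‖a‖ ^ 2 + t0 ^ 2) = |s - t| ^ 2 := by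
        rw [← hr2, div_pow, div_mul_cancel₀ _ (pow_ne_zero 2 hr.ne')]
      nlinarith [this]
    rw [this, Real.sqrt_sq (abs_nonneg _)]
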